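/- Let N, D be positive natural numbers. For each k ∈ ℕ let S_k ∈ ℝ^{N×D} have orthonormal columns, and set Φ_k := S_{k+1}S_kᵀ. For each k let Θ_k : ℝ^N → ℝ be convex with Θ_k ≥ 0, let λ_k ∈ [0, 2], let h_0 ∈ ℝ^N, let g_k be a subgradient of Θ_k at h_k, and define recursively h_{k+1} := Φ_k( h_k − λ_k·(Θ_k(h_k)/‖g_k‖²)·g_k ) if g_k ≠ 0 and h_{k+1} := Φ_k h_k otherwise. Suppose there exist K₀ ∈ ℕ and ω ∈ ℝ^N such that for all k ≥ K₀: Φ_k ω = ω and Θ_k(ω) = 0. Then the sequence (h_k)_{k∈ℕ} is bounded. -/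

import Mathlib

open Matrix
open scoped RealInnerProductSpace

/-! Past `K₀` every step is a relaxed Polyak subgradient step followed by the map `Φ_k`. Since
`Θ_k(ω) = 0`, the subgradient inequality at `ω` says that `ω` lies in the halfspace onto which
the Polyak step projects, so for `λ_k ∈ [0, 2]` the step does not increase the distance to `ω`.
The map `Φ_k = S_{k+1} S_kᵀ` is an isometry composed with the adjoint of an isometry, hence
nonexpansive, and it fixes `ω`. So `‖h_k - ω‖` is nonincreasing from `K₀` on. -/

theorem LinearMap.norm_adjoint_apply_le_of_norm_map {𝕜 E F : Type*} [RCLike 𝕜]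
    [NormedAddCommGroup E] [NormedAddCommGroup F] [InnerProductSpace 𝕜 E]
    [InnerProductSpace 𝕜 F] [FiniteDimensional 𝕜 E] [FiniteDimensional 𝕜 F]
    {T : E →ₗ[𝕜] F} (hT : ∀ x, ‖T x‖ = ‖x‖) (y : F) : ‖adjoint T y‖ ≤ ‖y‖ := by
  have key : ‖adjoint T y‖ ^ 2 ≤ ‖adjoint T y‖ * ‖y‖ :=
    calc ‖adjoint T y‖ ^ 2 = ‖inner 𝕜 (adjoint T y) (adjoint T y)‖ := by
          rw [inner_self_eq_norm_sq_to_K]; simp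
      _ = ‖inner 𝕜 y (T (adjoint T y))‖ := by rw [adjoint_inner_left]
      _ ≤ ‖y‖ * ‖T (adjoint T y)‖ := norm_inner_le_norm _ _
      _ = ‖adjoint T y‖ * ‖y‖ := by rw [hT, mul_comm]
  nlinarith [norm_nonneg (adjoint T y), norm_nonneg y]

namespace Matrix

variable {𝕜 l m n : Type*} [RCLike 𝕜] [Fintype l] [DecidableEq l] [Fintype m] [DecidableEq m]
  [Fintype n] [DecidableEq n]

theorem norm_toEuclideanLin_of_conjTranspose_mul_self {A : Matrix m n 𝕜} (hA : Aᴴ * A = 1)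
    (x : EuclideanSpace 𝕜 n) : ‖toEuclideanLin A x‖ = ‖x‖ := by
  refine (LinearMap.norm_map_iff_inner_map_map _).2 (fun x y ↦ ?_) x
  rw [← LinearMap.adjoint_inner_right, ← toEuclideanLin_conjTranspose_eq_adjoint,
    ← LinearMap.comp_apply, ← toLpLin_mul_same, hA, toLpLin_one, LinearMap.id_apply]

theorem norm_toEuclideanLin_mul_conjTranspose_le {A : Matrix l n 𝕜} {B : Matrix m n 𝕜}
    (hA : Aᴴ * A = 1) (hB : Bᴴ * B = 1) (x : EuclideanSpace 𝕜 m) :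
    ‖toEuclideanLin (A * Bᴴ) x‖ ≤ ‖x‖ := by
  rw [toLpLin_mul_same, LinearMap.comp_apply, norm_toEuclideanLin_of_conjTranspose_mul_self hA,
    toEuclideanLin_conjTranspose_eq_adjoint]
  exact LinearMap.norm_adjoint_apply_le_of_norm_map
    (norm_toEuclideanLin_of_conjTranspose_mul_self hB) x

end Matrix

section PolyakStep

variable {E : Type*} [NormedAddCommGroup E] [InnerProductSpace ℝ E]

/-- For `g = 0` this is the identity, as `θ / 0 = 0`. -/
noncomputable def polyakStep (θ μ : ℝ) (g p : E) : E :=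
  p - μ • ((θ / ‖g‖ ^ 2) • g)

theorem dist_polyakStep_le {θ μ : ℝ} {g p z : E} (hθ : 0 ≤ θ) (hθg : θ ≤ ⟪p - z, g⟫)
    (hμ : μ ∈ Set.Icc (0 : ℝ) 2) : dist (polyakStep θ μ g p) z ≤ dist p z := by
  rcases eq_or_ne g 0 with rfl | hg
  · simp [polyakStep]
  set t := μ * (θ / ‖g‖ ^ 2) with ht_def
  have ht : 0 ≤ t := mul_nonneg hμ.1 (by positivity)
  have htg : t * ‖g‖ ^ 2 = μ * θ := by
    rw [ht_def]; field_simp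
  have hsplit : polyakStep θ μ g p - z = (p - z) - t • g := by
    rw [polyakStep, smul_smul]; abel
  rw [dist_eq_norm, dist_eq_norm, hsplit,
    ← pow_le_pow_iff_left₀ (norm_nonneg _) (norm_nonneg _) two_ne_zero,
    norm_sub_sq_real, inner_smul_right, norm_smul, mul_pow, Real.norm_eq_abs, sq_abs]
  -- `‖p - z - t g‖² ≤ ‖p - z‖² - 2tθ + tμθ = ‖p - z‖² - tθ(2 - μ)`
  nlinarith [mul_le_mul_of_nonneg_left hθg ht, mul_nonneg (mul_nonneg ht hθ) (sub_nonneg.2 hμ.2)]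

end PolyakStep

theorem isBounded_range_of_dist_succ_le {X : Type*} [PseudoMetricSpace X] {u : ℕ → X} {x : X}
    {K₀ : ℕ} (hu : ∀ k ≥ K₀, dist (u (k + 1)) x ≤ dist (u k) x) :
    Bornology.IsBounded (Set.range u) := by
  have hanti := antitoneOn_nat_Ici_of_succ_le (f := fun k ↦ dist (u k) x) hu
  refine (((Set.finite_Iio K₀).image u).isBounded.union
    (Metric.isBounded_closedBall (x := x) (r := dist (u K₀) x))).subset ?_
  rintro _ ⟨k, rfl⟩
  rcases lt_or_ge k K₀ with hk | hk
  · exact Or.inl ⟨k, hk, rfl⟩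
  · exact Or.inr (hanti (le_refl K₀) hk hk)

theorem stmt_11_general (N D : ℕ)
    (S : ℕ → Matrix (Fin N) (Fin D) ℝ)
    (hS : ∀ k, (S k)ᵀ * S k = 1)
    (Θ : ℕ → EuclideanSpace ℝ (Fin N) → ℝ)
    (hnonneg : ∀ k x, 0 ≤ Θ k x)
    (lam : ℕ → ℝ) (hlam : ∀ k, lam k ∈ Set.Icc (0 : ℝ) 2)
    (h g : ℕ → EuclideanSpace ℝ (Fin N))
    (hsub : ∀ k, ∀ x : EuclideanSpace ℝ (Fin N), ⟪x - h k, g k⟫ + Θ k (h k) ≤ Θ k x)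
    (hrec₁ : ∀ k, g k ≠ 0 → h (k + 1) =
      toEuclideanLin (S (k + 1) * (S k)ᵀ)
        (h k - lam k • ((Θ k (h k) / ‖g k‖ ^ 2) • g k)))
    (hrec₂ : ∀ k, g k = 0 → h (k + 1) = toEuclideanLin (S (k + 1) * (S k)ᵀ) (h k))
    (K₀ : ℕ) (ω : EuclideanSpace ℝ (Fin N))
    (hω : ∀ k, K₀ ≤ k → toEuclideanLin (S (k + 1) * (S k)ᵀ) ω = ω ∧ Θ k ω = 0) :
    ∃ M : ℝ, ∀ k, ‖h k‖ ≤ M := by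
  have hΦ : ∀ k v, ‖toEuclideanLin (S (k + 1) * (S k)ᵀ) v‖ ≤ ‖v‖ := fun k v ↦ by
    simp only [← conjTranspose_eq_transpose_of_trivial] at hS ⊢
    exact norm_toEuclideanLin_mul_conjTranspose_le (hS (k + 1)) (hS k) v
  have hstep : ∀ k, h (k + 1) =
      toEuclideanLin (S (k + 1) * (S k)ᵀ) (polyakStep (Θ k (h k)) (lam k) (g k) (h k)) := by
    intro k
    rcases eq_or_ne (g k) 0 with hg | hg
    · simp [polyakStep, hrec₂ k hg, hg]
    · exact hrec₁ k hg
  have hfejer : ∀ k ≥ K₀, dist (h (k + 1)) ω ≤ dist (h k) ω := by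
    intro k hk
    obtain ⟨hfix, hzero⟩ := hω k hk
    have hθg : Θ k (h k) ≤ ⟪h k - ω, g k⟫ := by
      have := hsub k ω
      rw [hzero, ← neg_sub, inner_neg_left] at this
      linarith
    calc dist (h (k + 1)) ω
        = ‖toEuclideanLin (S (k + 1) * (S k)ᵀ)
            (polyakStep (Θ k (h k)) (lam k) (g k) (h k) - ω)‖ := by
          rw [map_sub, hfix, hstep k, dist_eq_norm]
      _ ≤ dist (polyakStep (Θ k (h k)) (lam k) (g k) (h k)) ω := by
          rw [dist_eq_norm]; exact hΦ k _
      _ ≤ dist (h k) ω := dist_polyakStep_le (hnonneg k (h k)) hθg (hlam k)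
  obtain ⟨M, hM⟩ := (isBounded_range_of_dist_succ_le hfejer).exists_norm_le
  exact ⟨M, fun k ↦ hM _ (Set.mem_range_self k)⟩

/-- Boundedness of the R-APSM iterates: with `Φ_k := S_{k+1}S_kᵀ`,
convex `Θ_k ≥ 0`, `λ_k ∈ [0,2]`, subgradients `g_k` of `Θ_k` at `h_k`, and the
recursion `h_{k+1} = Φ_k(h_k − λ_k(Θ_k(h_k)/‖g_k‖²)g_k)` (resp. `Φ_k h_k` when
`g_k = 0`), if there are `K₀` and `ω` with `Φ_k ω = ω` and `Θ_k(ω) = 0` for all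
`k ≥ K₀`, then the sequence `(h_k)` is bounded. -/
theorem stmt_11 (N D : ℕ) (hN : 0 < N) (hD : 0 < D)
    (S : ℕ → Matrix (Fin N) (Fin D) ℝ)
    (hS : ∀ k, (S k)ᵀ * S k = 1)
    (Θ : ℕ → EuclideanSpace ℝ (Fin N) → ℝ)
    (hconv : ∀ k, ConvexOn ℝ Set.univ (Θ k))
    (hnonneg : ∀ k x, 0 ≤ Θ k x)
    (lam : ℕ → ℝ) (hlam : ∀ k, lam k ∈ Set.Icc (0 : ℝ) 2)
    (h g : ℕ → EuclideanSpace ℝ (Fin N))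
    (hsub : ∀ k, ∀ x : EuclideanSpace ℝ (Fin N), ⟪x - h k, g k⟫ + Θ k (h k) ≤ Θ k x)
    (hrec₁ : ∀ k, g k ≠ 0 → h (k + 1) =
      toEuclideanLin (S (k + 1) * (S k)ᵀ)
        (h k - lam k • ((Θ k (h k) / ‖g k‖ ^ 2) • g k)))
    (hrec₂ : ∀ k, g k = 0 → h (k + 1) = toEuclideanLin (S (k + 1) * (S k)ᵀ) (h k))
    (K₀ : ℕ) (ω : EuclideanSpace ℝ (Fin N))
    (hω : ∀ k, K₀ ≤ k → toEuclideanLin (S (k + 1) * (S k)ᵀ) ω = ω ∧ Θ k ω = 0) :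
    ∃ M : ℝ, ∀ k, ‖h k‖ ≤ M :=
  stmt_11_general N D S hS Θ hnonneg lam hlam h g hsub hrec₁ hrec₂ K₀ ω hω
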